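/- arXiv:2001.01200 — 2 statements merged into one kernel-verified Lean document; each statement's English description precedes it below -/
import Mathlib

section
/- Let V be a 6-dimensional real vector space with basis dual coordinates v^1,w^1,v^2,w^2,v^3,w^3, and let ψ₀ = Im((v^1+i w^1)∧(v^2+i w^2)∧(v^3+i w^3)) = -w^{123} + w^1∧v^{23} + w^2∧v^{31} + w^3∧v^{12}. Then for every nonzero vector v ∈ V, the 2-form ι(v)ψ₀ obtained by interior product has rank 4 (i.e., (ι(v)ψ₀)∧(ι(v)ψ₀) ≠ 0 but (ι(v)ψ₀)^3 = 0 as forms on V). -/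
noncomputable section

/-- `V = ℝ^6`, presented as pairs `(v-coordinates, w-coordinates)`. -/
abbrev V6 : Type := (Fin 3 → ℝ) × (Fin 3 → ℝ)

/-- The dual coordinates `v^1, v^2, v^3`. -/
def vco (i : Fin 3) : Module.Dual ℝ V6 := (LinearMap.proj i).comp (LinearMap.fst ℝ _ _)

/-- The dual coordinates `w^1, w^2, w^3`. -/
def wco (i : Fin 3) : Module.Dual ℝ V6 := (LinearMap.proj i).comp (LinearMap.snd ℝ _ _)

open ExteriorAlgebra

/-- The standard definite 3-form
`ψ₀ = Im((v^1+iw^1)∧(v^2+iw^2)∧(v^3+iw^3)) = -w^{123} + w^1∧v^{23} + w^2∧v^{31} + w^3∧v^{12}`,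
as an element of the exterior algebra of the dual space. -/
def psi0 : ExteriorAlgebra ℝ (Module.Dual ℝ V6) :=
  -(ι ℝ (wco 0) * ι ℝ (wco 1) * ι ℝ (wco 2))
    + ι ℝ (wco 0) * ι ℝ (vco 1) * ι ℝ (vco 2)
    + ι ℝ (wco 1) * ι ℝ (vco 2) * ι ℝ (vco 0)
    + ι ℝ (wco 2) * ι ℝ (vco 0) * ι ℝ (vco 1)

/-- Interior product `ι(x)` of a vector `x : V` with a form, i.e. left contraction on the
exterior algebra of the dual of `V`. -/
def intProd (x : V6) (φ : ExteriorAlgebra ℝ (Module.Dual ℝ V6)) :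
    ExteriorAlgebra ℝ (Module.Dual ℝ V6) :=
  CliffordAlgebra.contractLeft (Module.Dual.eval ℝ V6 x) φ

/-! With `θ_j = v^j + i w^j` and `z_j = θ_j(x)`, the 2-form `β = ι(x)ψ₀` is the imaginary
part of `σ = z_1 θ_2∧θ_3 + z_2 θ_3∧θ_1 + z_3 θ_1∧θ_2`. As `σ∧σ = 0`, the real part `α` of `σ`
satisfies `α∧α = β∧β` and `α∧β = 0`, whence `β∧β∧β = α∧α∧β = 0`. The coefficient of
`v^{jk}∧w^{jk}` in `β∧β` is `-2|z_i|²` for `{i, j, k} = {1, 2, 3}`, so `β∧β = 0` forces `x = 0`.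
Both facts are checked by expanding in the coframe `(v^1, v^2, v^3, w^1, w^2, w^3)`; coefficients
are read off by contracting with the dual frame. -/

namespace Psi0

abbrev Λ : Type := ExteriorAlgebra ℝ (Module.Dual ℝ V6)

def coframe : Fin 6 → Module.Dual ℝ V6 := ![vco 0, vco 1, vco 2, wco 0, wco 1, wco 2]

def e (i : Fin 6) : Λ := ι ℝ (coframe i)

def coord (x : V6) : Fin 6 → ℝ := ![x.1 0, x.1 1, x.1 2, x.2 0, x.2 1, x.2 2]

lemma e_mul_self (i : Fin 6) : e i * e i = 0 := ι_sq_zero _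

lemma e_mul_e_mul_self (i : Fin 6) (z : Λ) : e i * (e i * z) = 0 := by
  rw [← mul_assoc, e_mul_self, zero_mul]

-- Stated for `j < i` so that `simp` sorts products of the `e i` into increasing order.
lemma e_mul_e_of_lt {i j : Fin 6} (_ : j < i) : e i * e j = -(e j * e i) :=
  eq_neg_of_add_eq_zero_left (ι_add_mul_swap _ _)

lemma e_mul_e_mul_of_lt {i j : Fin 6} (h : j < i) (z : Λ) :
    e i * (e j * z) = -(e j * (e i * z)) := by
  rw [← mul_assoc, e_mul_e_of_lt h, neg_mul, mul_assoc]

section intProd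

variable (x : V6)

@[simp] lemma intProd_add (φ ψ : Λ) : intProd x (φ + ψ) = intProd x φ + intProd x ψ :=
  map_add _ _ _

@[simp] lemma intProd_sub (φ ψ : Λ) : intProd x (φ - ψ) = intProd x φ - intProd x ψ :=
  map_sub _ _ _

@[simp] lemma intProd_neg (φ : Λ) : intProd x (-φ) = -intProd x φ := map_neg _ _

@[simp] lemma intProd_smul (c : ℝ) (φ : Λ) : intProd x (c • φ) = c • intProd x φ :=
  map_smul _ _ _

@[simp] lemma intProd_zero : intProd x 0 = 0 := map_zero _

@[simp] lemma intProd_one : intProd x 1 = 0 := CliffordAlgebra.contractLeft_one (Q := 0) _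

end intProd

lemma intProd_e_mul (x : V6) (i : Fin 6) (z : Λ) :
    intProd x (e i * z) = coord x i • z - e i * intProd x z := by
  have : coframe i x = coord x i := by fin_cases i <;> rfl
  simp [intProd, e, CliffordAlgebra.contractLeft_ι_mul, this, Algebra.smul_def]

lemma intProd_e (x : V6) (i : Fin 6) : intProd x (e i) = coord x i • 1 := by
  simpa using intProd_e_mul x i 1

lemma psi0_eq : psi0 = -(e 3 * (e 4 * e 5)) + e 3 * (e 1 * e 2) + e 4 * (e 2 * e 0)
    + e 5 * (e 0 * e 1) := by
  simp only [psi0, e, coframe, mul_assoc]; rfl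

lemma intProd_psi0 (x : V6) : intProd x psi0 =
    x.2 2 • (e 0 * e 1) - x.2 1 • (e 0 * e 2) + x.1 2 • (e 0 * e 4) - x.1 1 • (e 0 * e 5)
      + x.2 0 • (e 1 * e 2) - x.1 2 • (e 1 * e 3) + x.1 0 • (e 1 * e 5)
      + x.1 1 • (e 2 * e 3) - x.1 0 • (e 2 * e 4)
      - x.2 2 • (e 3 * e 4) + x.2 1 • (e 3 * e 5) - x.2 0 • (e 4 * e 5) := by
  simp (disch := decide) only [psi0_eq, intProd_add, intProd_neg, intProd_e_mul, intProd_e, coord,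
    Matrix.cons_val, mul_sub, mul_smul_comm, mul_one, neg_sub, e_mul_e_of_lt, e_mul_e_mul_of_lt]
  module

lemma sq_intProd_psi0 (x : V6) : intProd x psi0 * intProd x psi0 =
    (2 * (x.1 1 * x.2 2 - x.1 2 * x.2 1)) • (e 0 * (e 1 * (e 2 * e 3)))
      + (2 * (x.1 2 * x.2 0 - x.1 0 * x.2 2)) • (e 0 * (e 1 * (e 2 * e 4)))
      + (2 * (x.1 0 * x.2 1 - x.1 1 * x.2 0)) • (e 0 * (e 1 * (e 2 * e 5)))
      - (2 * (x.1 2 * x.1 2 + x.2 2 * x.2 2)) • (e 0 * (e 1 * (e 3 * e 4)))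
      + (2 * (x.1 1 * x.1 2 + x.2 1 * x.2 2)) • (e 0 * (e 1 * (e 3 * e 5)))
      - (2 * (x.1 0 * x.1 2 + x.2 0 * x.2 2)) • (e 0 * (e 1 * (e 4 * e 5)))
      + (2 * (x.1 1 * x.1 2 + x.2 1 * x.2 2)) • (e 0 * (e 2 * (e 3 * e 4)))
      - (2 * (x.1 1 * x.1 1 + x.2 1 * x.2 1)) • (e 0 * (e 2 * (e 3 * e 5)))
      + (2 * (x.1 0 * x.1 1 + x.2 0 * x.2 1)) • (e 0 * (e 2 * (e 4 * e 5)))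
      + (2 * (x.1 1 * x.2 2 - x.1 2 * x.2 1)) • (e 0 * (e 3 * (e 4 * e 5)))
      - (2 * (x.1 0 * x.1 2 + x.2 0 * x.2 2)) • (e 1 * (e 2 * (e 3 * e 4)))
      + (2 * (x.1 0 * x.1 1 + x.2 0 * x.2 1)) • (e 1 * (e 2 * (e 3 * e 5)))
      - (2 * (x.1 0 * x.1 0 + x.2 0 * x.2 0)) • (e 1 * (e 2 * (e 4 * e 5)))
      + (2 * (x.1 2 * x.2 0 - x.1 0 * x.2 2)) • (e 1 * (e 3 * (e 4 * e 5)))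
      + (2 * (x.1 0 * x.2 1 - x.1 1 * x.2 0)) • (e 2 * (e 3 * (e 4 * e 5))) := by
  rw [intProd_psi0]
  simp (disch := decide) only [add_mul, sub_mul, mul_add, mul_sub, smul_mul_assoc, mul_smul_comm,
    mul_assoc, mul_neg, neg_neg, smul_neg, e_mul_self, e_mul_e_mul_self, e_mul_e_of_lt,
    e_mul_e_mul_of_lt, mul_zero, smul_zero]
  module

lemma cube_intProd_psi0 (x : V6) :
    intProd x psi0 * intProd x psi0 * intProd x psi0 = 0 := by
  rw [sq_intProd_psi0, intProd_psi0]
  simp (disch := decide) only [add_mul, sub_mul, mul_add, mul_sub, smul_mul_assoc, mul_smul_comm,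
    mul_assoc, mul_neg, neg_neg, smul_neg, e_mul_self, e_mul_e_mul_self, e_mul_e_of_lt,
    e_mul_e_mul_of_lt, mul_zero, smul_zero]
  module

def frame (j : Fin 6) : V6 :=
  (fun k => if (k : ℕ) = j then 1 else 0, fun k => if (k : ℕ) + 3 = j then 1 else 0)

lemma coord_frame_self (i : Fin 6) : coord (frame i) i = 1 := by
  fin_cases i <;> simp [coord, frame]

lemma coord_frame_of_ne {i j : Fin 6} (h : i ≠ j) : coord (frame j) i = 0 := by
  fin_cases i <;> fin_cases j <;> simp_all [coord, frame]

def coeff4 (i j k l : Fin 6) (φ : Λ) : Λ :=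
  intProd (frame i) (intProd (frame j) (intProd (frame k) (intProd (frame l) φ)))

lemma coeff4_sq_intProd_psi0 (x : V6) :
    coeff4 1 2 4 5 (intProd x psi0 * intProd x psi0)
      + coeff4 0 2 3 5 (intProd x psi0 * intProd x psi0)
      + coeff4 0 1 3 4 (intProd x psi0 * intProd x psi0)
      = (-2 * ∑ i, (x.1 i ^ 2 + x.2 i ^ 2)) • 1 := by
  simp (disch := decide) only [coeff4, sq_intProd_psi0, intProd_add, intProd_sub, intProd_neg,
    intProd_smul, intProd_zero, intProd_e_mul, intProd_e, coord_frame_self, coord_frame_of_ne,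
    one_smul, zero_smul, smul_zero, sub_zero, zero_sub, mul_zero, mul_one, mul_neg, neg_neg,
    neg_zero, smul_neg, Fin.sum_univ_three]
  module

lemma eq_zero_of_sum_sq_eq_zero {x : V6} (h : ∑ i, (x.1 i ^ 2 + x.2 i ^ 2) = 0) : x = 0 := by
  have hi (i : Fin 3) : x.1 i ^ 2 = 0 ∧ x.2 i ^ 2 = 0 :=
    (add_eq_zero_iff_of_nonneg (sq_nonneg _) (sq_nonneg _)).mp <|
      (Finset.sum_eq_zero_iff_of_nonneg fun i _ => by positivity).mp h i (Finset.mem_univ i)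
  ext i
  · exact eq_zero_of_pow_eq_zero (hi i).1
  · exact eq_zero_of_pow_eq_zero (hi i).2

end Psi0

/-- for every nonzero `x ∈ V`, the 2-form `ι(x)ψ₀` has rank 4:
`(ι(x)ψ₀) ∧ (ι(x)ψ₀) ≠ 0` but `(ι(x)ψ₀)^3 = 0`. -/
theorem stmt_0 (x : V6) (hx : x ≠ 0) :
    intProd x psi0 * intProd x psi0 ≠ 0 ∧
      intProd x psi0 * intProd x psi0 * intProd x psi0 = 0 := by
  refine ⟨fun hsq => hx (Psi0.eq_zero_of_sum_sq_eq_zero ?_), Psi0.cube_intProd_psi0 x⟩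
  have hcoeff := Psi0.coeff4_sq_intProd_psi0 x
  simp only [hsq, Psi0.coeff4, Psi0.intProd_zero, add_zero] at hcoeff
  have := (smul_eq_zero.mp hcoeff.symm).resolve_right one_ne_zero
  linarith
end
end

section
/- Irreflexivity under symmetry: if there exists a family (e_t, K_t), t ∈ [t₁,t₂] with t₁ < t₂, such that ∂e^i/∂t = Σ_j (K_{ij})_t e^j_t with (1/2)(K_t + K_tᵀ) positive-definite for all t, then e^{123}_{t₂} ≠ e^{123}_{t₁}; more precisely, writing e^{123}_t = ρ(t) e^{123}_{t₁} pointwise with ρ(t₁) = 1, one has ρ'(t) = tr(K_t)ρ(t) with tr(K_t) > 0, hence ρ(t₂) > 1. Consequently the relation ≺^{inv} on 𝒞^{inv}(M) is irreflexive: ψ ⊀^{inv} ψ for every ψ. -/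
/-!
Jacobi's formula turns `E' = K E` into `(det E)' = tr K · det E`, and
`tr K = tr ((K + Kᵀ) / 2) > 0` because a positive-definite matrix has positive diagonal.
A solution of `ρ' = c ρ` with `c > 0` and `ρ(t₁) > 0` cannot drop back to its initial value,
so it stays positive and is then strictly increasing.
-/

open Matrix Set

theorem Matrix.trace_pos_of_posDef_symmPart {n : Type*} [Fintype n] [Nonempty n]
    {K : Matrix n n ℝ} (hK : ((1 / 2 : ℝ) • (K + Kᵀ)).PosDef) : 0 < K.trace := by
  have h := hK.trace_pos
  rw [trace_smul, trace_add, trace_transpose, smul_eq_mul] at h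
  linarith

namespace Matrix

variable {n : Type*} [Fintype n] [DecidableEq n]

theorem sum_det_updateRow_mul {R : Type*} [CommRing R] (K A : Matrix n n R) :
    ∑ i, (A.updateRow i ((K * A) i)).det = K.trace * A.det := by
  have hrow : ∀ i, (K * A) i = ∑ k, K i k • A k := fun i => by
    ext j
    simp [mul_apply, Finset.sum_apply]
  simp only [hrow, det_updateRow_sum, smul_eq_mul, trace, diag, Finset.sum_mul]

variable {𝕜 : Type*} [NontriviallyNormedField 𝕜]

def detRowContinuousMultilinear : ContinuousMultilinearMap 𝕜 (fun _ : n => n → 𝕜) 𝕜 :=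
  ⟨detRowAlternating.toMultilinearMap, continuous_id.matrix_det⟩

end Matrix

/-- Jacobi's formula. -/
theorem HasDerivWithinAt.matrix_det {n : Type*} [Fintype n] [DecidableEq n]
    {𝕜 : Type*} [NontriviallyNormedField 𝕜] {E : 𝕜 → Matrix n n 𝕜}
    {E' : Matrix n n 𝕜} {s : Set 𝕜} {t : 𝕜}
    (hE : ∀ i j, HasDerivWithinAt (fun s => E s i j) (E' i j) s t) :
    HasDerivWithinAt (fun s => (E s).det) (∑ i, ((E t).updateRow i (E' i)).det) s t := by
  have hE' : HasDerivWithinAt (fun s i j => E s i j) (fun i j => E' i j) s t :=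
    hasDerivWithinAt_pi.2 fun i => hasDerivWithinAt_pi.2 (hE i)
  have h := (detRowContinuousMultilinear.hasFDerivAt
    (fun i j => E t i j)).comp_hasDerivWithinAt t hE'
  rw [ContinuousMultilinearMap.linearDeriv_apply] at h
  exact h

theorem strictMonoOn_of_hasDerivWithinAt_mul_self {f c : ℝ → ℝ} {a b : ℝ}
    (hf : ∀ t ∈ Icc a b, HasDerivWithinAt f (c t * f t) (Icc a b) t)
    (hc : ∀ t ∈ Icc a b, 0 < c t) (ha : 0 < f a) : StrictMonoOn f (Icc a b) := by
  have hcont : ContinuousOn f (Icc a b) := fun t ht => (hf t ht).continuousWithinAt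
  -- Wherever `f` touches the level `f a`, its derivative `c t * f a` is positive.
  have hlow : ∀ t ∈ Icc a b, f a ≤ f t := fun t ht =>
    image_le_of_deriv_right_lt_deriv_boundary' continuousOn_const
      (fun x _ => hasDerivWithinAt_const x _ (f a)) le_rfl hcont
      (fun x hx => (hf x (Ico_subset_Icc_self hx)).mono_of_mem_nhdsWithin
        (Icc_mem_nhdsGE_of_mem hx))
      (fun x hx hfx => hfx ▸ mul_pos (hc x (Ico_subset_Icc_self hx)) ha) ht
  refine strictMonoOn_of_hasDerivWithinAt_pos (convex_Icc a b) hcont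
    (f' := fun t => c t * f t) (fun t ht => ?_) fun t ht => ?_
  · rw [interior_Icc] at ht ⊢
    exact (hf t (Ioo_subset_Icc_self ht)).mono Ioo_subset_Icc_self
  · rw [interior_Icc] at ht
    exact mul_pos (hc t (Ioo_subset_Icc_self ht)) (ha.trans_le (hlow t (Ioo_subset_Icc_self ht)))

/-- irreflexivity under symmetry (pointwise form).  If a family of
coframes, written as a matrix family `E t` in a fixed basis (so that the volume
form is `e^{123}_t = det (E t) ·` a fixed 3-form, with `det (E t₁) > 0`),
satisfies `∂e^i/∂t = Σ_j (K_{ij})_t e^j_t`, i.e. `E' = K E` entrywise, with the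
symmetrization `(1/2)(K_t + K_tᵀ)` positive-definite on `[t₁,t₂]`, `t₁ < t₂`,
then the ratio `ρ t = det (E t) / det (E t₁)` satisfies `ρ(t₁) = 1`,
`ρ' = tr(K_t) ρ` with `tr (K_t) > 0`, hence `ρ(t₂) > 1`; consequently
`e^{123}_{t₂} ≠ e^{123}_{t₁}`, which is the irreflexivity `ψ ⊀^inv ψ` of the
relation `≺^inv` on `𝒞^inv(M)`. -/
theorem stmt_14 (t₁ t₂ : ℝ) (ht : t₁ < t₂) (E K : ℝ → Matrix (Fin 3) (Fin 3) ℝ)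
    (hdet : 0 < (E t₁).det)
    (hE : ∀ t ∈ Set.Icc t₁ t₂, ∀ i j,
      HasDerivWithinAt (fun s => E s i j) ((K t * E t) i j) (Set.Icc t₁ t₂) t)
    (hK : ∀ t ∈ Set.Icc t₁ t₂, ((1 / 2 : ℝ) • (K t + (K t)ᵀ)).PosDef) :
    (fun t => (E t).det / (E t₁).det) t₁ = 1 ∧
    (∀ t ∈ Set.Icc t₁ t₂,
      HasDerivWithinAt (fun s => (E s).det / (E t₁).det)
        ((K t).trace * ((E t).det / (E t₁).det)) (Set.Icc t₁ t₂) t ∧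
      0 < (K t).trace) ∧
    1 < (E t₂).det / (E t₁).det ∧ (E t₂).det ≠ (E t₁).det := by
  have hdetDeriv : ∀ t ∈ Icc t₁ t₂,
      HasDerivWithinAt (fun s => (E s).det) ((K t).trace * (E t).det) (Icc t₁ t₂) t :=
    fun t ht => by simpa only [sum_det_updateRow_mul] using HasDerivWithinAt.matrix_det (hE t ht)
  have htr : ∀ t ∈ Icc t₁ t₂, 0 < (K t).trace := fun t ht =>
    trace_pos_of_posDef_symmPart (hK t ht)
  have hlt : (E t₁).det < (E t₂).det :=
    strictMonoOn_of_hasDerivWithinAt_mul_self hdetDeriv htr hdet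
      ⟨le_rfl, ht.le⟩ ⟨ht.le, le_rfl⟩ ht
  refine ⟨div_self hdet.ne', fun t ht => ⟨?_, htr t ht⟩, (one_lt_div hdet).2 hlt, hlt.ne'⟩
  simpa only [mul_div_assoc] using (hdetDeriv t ht).div_const (E t₁).det
end
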